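/- arXiv:2103.13739 — 10 statements merged into one kernel-verified Lean document; each statement's English description precedes it below -/
import Mathlib

section
/- Let R be a commutative ring with identity, let A be an n×n matrix over R with McCoy rank less than n, and let w ∈ R^n be a left eigenvector of A for the eigenvalue 0 (i.e., wᵀA = 0). Then for all i, j ∈ {1,...,n}, w_i · (Adj A)_j = w_j · (Adj A)_i, where (Adj A)_k denotes the k-th column of the adjugate of A. -/
/-!
Write `B` for `A` with row `j` replaced by `v`, and `f x` for the determinant of `B` with row `i`
replaced by `x`. Then `f` is linear, kills the rows `A l` with `l ≠ i, j` (repeated rows),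
`f (A i) = det B` and, after swapping rows `i` and `j`, `f (A j) = -det (A.updateRow i v)`.
Applying `f` to `∑ l, w l • A l = wᵀA = 0` gives `w i * det B = w j * det (A.updateRow i v)`;
for `v = Pi.single k 1` these determinants are the adjugate entries.
-/

open Matrix

section

variable {R : Type*} [CommRing R] {n : Type*} [DecidableEq n] [Fintype n]

theorem det_updateRow_vecMul (M A : Matrix n n R) (i : n) (w : n → R) :
    (M.updateRow i (w ᵥ* A)).det = ∑ l, w l * (M.updateRow i (A l)).det := by
  simp_rw [vecMul_eq_sum, ← det_updateRow_smul]
  exact detRowAlternating.map_update_sum _ i _ M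

theorem det_updateRow_updateRow_swap (M : Matrix n n R) {i j : n} (hij : i ≠ j) (x y : n → R) :
    ((M.updateRow i x).updateRow j y).det = -((M.updateRow i y).updateRow j x).det := by
  have hswap : ((M.updateRow i y).updateRow j x).submatrix (Equiv.swap i j) id =
      (M.updateRow i x).updateRow j y := by
    ext a b
    rcases eq_or_ne a i with rfl | hai
    · simp [hij]
    rcases eq_or_ne a j with rfl | haj
    · simp [hij]
    · simp [Equiv.swap_apply_of_ne_of_ne hai haj, hai, haj]
  rw [← hswap, det_permute, Equiv.Perm.sign_swap hij]
  simp

theorem mul_det_updateRow_eq_of_vecMul_eq_zero (A : Matrix n n R) {w : n → R}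
    (hwA : w ᵥ* A = 0) (i j : n) (v : n → R) :
    w i * (A.updateRow j v).det = w j * (A.updateRow i v).det := by
  rcases eq_or_ne i j with rfl | hij
  · rfl
  set B := A.updateRow j v
  have hcomb : ∑ l, w l * (B.updateRow i (A l)).det = 0 := by
    rw [← det_updateRow_vecMul, hwA]
    exact detRowAlternating.map_update_zero B i
  have hrepeated : ∀ l, l ≠ i ∧ l ≠ j → w l * (B.updateRow i (A l)).det = 0 := by
    rintro l ⟨hli, hlj⟩
    rw [← updateRow_ne (M := A) (b := v) hlj, det_updateRow_eq_zero hli, mul_zero]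
  have hrow_i : B.updateRow i (A i) = B := by
    rw [← updateRow_ne (M := A) (b := v) hij, updateRow_eq_self]
  have hrow_j : (B.updateRow i (A j)).det = -(A.updateRow i v).det := by
    rw [det_updateRow_updateRow_swap A hij.symm, updateRow_eq_self]
  rw [Fintype.sum_eq_add i j hij hrepeated, hrow_i, hrow_j] at hcomb
  linear_combination hcomb

end

theorem adjugate_columns_proportional_of_left_eigenvector_zero_general
    {R : Type*} [CommRing R] {n : ℕ} (A : Matrix (Fin n) (Fin n) R)
    (w : Fin n → R) (hwA : A.vecMul w = 0) :
    ∀ i j k : Fin n, w i * A.adjugate k j = w j * A.adjugate k i := by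
  intro i j k
  simp only [adjugate_apply]
  exact mul_det_updateRow_eq_of_vecMul_eq_zero A hwA i j _

/-- Grinberg's lemma: if `w` is a left eigenvector of `A` for the eigenvalue `0`
(which forces the McCoy rank of `A` to be smaller than `n`), then
`w i * (Adj A)_j = w j * (Adj A)_i` for all columns `i, j` of the adjugate. -/
theorem adjugate_columns_proportional_of_left_eigenvector_zero
    {R : Type*} [CommRing R] {n : ℕ} (A : Matrix (Fin n) (Fin n) R)
    (w : Fin n → R) (hw : w ≠ 0) (hwA : A.vecMul w = 0) :
    ∀ i j k : Fin n, w i * A.adjugate k j = w j * A.adjugate k i :=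
  adjugate_columns_proportional_of_left_eigenvector_zero_general A w hwA
end

section
/- Let R be a commutative ring with identity, let A be an n×n matrix over R with McCoy rank less than n, and let v ∈ R^n be a right eigenvector of A for the eigenvalue 0 (i.e., Av = 0). Then for all i, j ∈ {1,...,n}, v_i · (Adj A)^j = v_j · (Adj A)^i, where (Adj A)^k denotes the k-th row of the adjugate of A. -/
/-!
Replace row `k` of `A` by the basis row `e_j`. The new matrix `C` sends `v` to `v_j e_k`, so
`adj C * C = det C • 1` gives `det C * v_i = adj(C)_{ik} * v_j`. Here `det C` is the cofactor
`adj(A)_{jk}`, and `adj(C)_{ik} = adj(A)_{ik}` because that entry ignores row `k`.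
-/

open Matrix

namespace Matrix

variable {n R : Type*} [Fintype n] [DecidableEq n] [CommRing R]

theorem adjugate_updateRow_apply_self (A : Matrix n n R) (i k : n) (w : n → R) :
    (A.updateRow k w).adjugate i k = A.adjugate i k := by
  rw [adjugate_apply, adjugate_apply, updateRow_idem]

theorem updateRow_single_mulVec_of_mulVec_eq_zero {A : Matrix n n R} {v : n → R}
    (hAv : A *ᵥ v = 0) (j k : n) :
    A.updateRow k (Pi.single j 1) *ᵥ v = Pi.single k (v j) := by
  rw [updateRow_mulVec, hAv, single_one_dotProduct]
  rfl

theorem det_mul_apply_of_mulVec_eq_single {C : Matrix n n R} {v : n → R} {k : n} {c : R}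
    (hCv : C *ᵥ v = Pi.single k c) (i : n) :
    C.det * v i = C.adjugate i k * c := by
  have h : C.det • v = C.adjugate *ᵥ Pi.single k c := by
    rw [← hCv, mulVec_mulVec, adjugate_mul, smul_mulVec, one_mulVec]
  simpa using congrFun h i

end Matrix

theorem adjugate_rows_proportional_of_right_eigenvector_zero_general
    {R : Type*} [CommRing R] {n : ℕ} (A : Matrix (Fin n) (Fin n) R)
    (v : Fin n → R) (hAv : A.mulVec v = 0) :
    ∀ i j k : Fin n, v i * A.adjugate j k = v j * A.adjugate i k := by
  intro i j k
  have h := det_mul_apply_of_mulVec_eq_single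
    (updateRow_single_mulVec_of_mulVec_eq_zero hAv j k) i
  rw [← adjugate_apply, adjugate_updateRow_apply_self] at h
  rw [mul_comm, h, mul_comm]

/-- Row version of Grinberg's lemma: if `v` is a right eigenvector of `A` for the
eigenvalue `0` (which forces the McCoy rank of `A` to be smaller than `n`), then
`v i * (Adj A)^j = v j * (Adj A)^i` for all rows `i, j` of the adjugate. -/
theorem adjugate_rows_proportional_of_right_eigenvector_zero
    {R : Type*} [CommRing R] {n : ℕ} (A : Matrix (Fin n) (Fin n) R)
    (v : Fin n → R) (hv : v ≠ 0) (hAv : A.mulVec v = 0) :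
    ∀ i j k : Fin n, v i * A.adjugate j k = v j * A.adjugate i k :=
  adjugate_rows_proportional_of_right_eigenvector_zero_general A v hAv
end

section
/- (Thompson–McEnteggert formula over commutative rings) Let R be a commutative ring with identity, A an n×n matrix over R, λ₀ ∈ R an eigenvalue of A, v a right eigenvector (Av = λ₀v) and w a left eigenvector (wᵀA = λ₀wᵀ) of A for λ₀. Then (wᵀv) · Adj(λ₀I − A) = p_A'(λ₀) · v wᵀ, where p_A(λ) = det(λI − A) is the characteristic polynomial and p_A' is its formal derivative. -/
/-!
Write `B = λ₀I - A`. Over `R[X]` the eigenvector relation gives `(XI - A) v = (X - λ₀) v`, hence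
`p_A(X) v = adj(XI - A)(XI - A) v = (X - λ₀) adj(XI - A) v`; differentiating at `λ₀` yields
`adj(B) v = p_A'(λ₀) v`. On the other side, `wᵀB = 0` makes every row of `adj B` proportional to
`wᵀ` in the strong sense `w_i adj(B)_{jk} = w_k adj(B)_{ji}` (a row operation on the cofactor
determinants), which is exactly what turns `(wᵀv) adj B` into `(adj(B) v) wᵀ`.
-/

open Matrix Polynomial

theorem Polynomial.eval_derivative_X_sub_C_mul {R : Type*} [CommRing R] (a : R) (q : R[X]) :
    (derivative ((X - C a) * q)).eval a = q.eval a := by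
  simp [derivative_mul]

namespace Matrix

variable {R : Type*} [CommRing R] {n : Type*} [Fintype n] [DecidableEq n]

theorem det_updateRow_updateRow_swap (A : Matrix n n R) {i k : n} (hik : i ≠ k) (x y : n → R) :
    ((A.updateRow k x).updateRow i y).det = -((A.updateRow k y).updateRow i x).det := by
  have hswap : (A.updateRow k x).updateRow i y =
      ((A.updateRow k y).updateRow i x).submatrix (Equiv.swap i k) id := by
    ext r m
    rcases eq_or_ne r i with rfl | hri
    · simp [updateRow_ne hik.symm]
    rcases eq_or_ne r k with rfl | hrk
    · simp [updateRow_ne hri]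
    · simp [updateRow_ne hri, updateRow_ne hrk, Equiv.swap_apply_of_ne_of_ne hri hrk]
  rw [hswap, det_permute, Equiv.Perm.sign_swap hik]
  simp

theorem mul_adjugate_apply_eq_of_vecMul_eq_zero {B : Matrix n n R} {w : n → R}
    (hw : w ᵥ* B = 0) (i j k : n) : w i * B.adjugate j k = w k * B.adjugate j i := by
  rcases eq_or_ne i k with rfl | hik
  · rfl
  set M := B.updateRow k (Pi.single j 1)
  -- Adding `∑_{l ≠ i, k} w_l M_l` to `w_i M_i` leaves `-w_k B_k` in row `i`; swapping rows
  -- `i` and `k` then yields the cofactor determinant of `adj(B)_{ji}`.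
  have hrel : ∑ l, Function.update w k 0 l • M l = -(w k) • B k := by
    have hterm : ∀ l, Function.update w k 0 l • M l =
        w l • B l - (Pi.single k (w k) : n → R) l • B l := by
      intro l
      rcases eq_or_ne l k with rfl | hlk
      · simp
      · simp [M, hlk]
    simp only [hterm, Finset.sum_sub_distrib, ← vecMul_eq_sum, hw, Pi.single_apply, ite_smul,
      zero_smul, Finset.sum_ite_eq', Finset.mem_univ, if_true, zero_sub, neg_smul]
  have hdet := det_updateRow_sum M i (Function.update w k 0)
  rw [hrel, Function.update_of_ne hik, det_updateRow_smul, det_updateRow_updateRow_swap _ hik,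
    updateRow_eq_self] at hdet
  rw [adjugate_apply, adjugate_apply, ← smul_eq_mul, ← hdet]
  ring

theorem dotProduct_smul_adjugate_of_vecMul_eq_zero {B : Matrix n n R} {w : n → R}
    (hw : w ᵥ* B = 0) (v : n → R) :
    (w ⬝ᵥ v) • B.adjugate = vecMulVec (B.adjugate *ᵥ v) w := by
  ext j k
  simp only [smul_apply, smul_eq_mul, vecMulVec_apply, dotProduct, mulVec, Finset.sum_mul]
  refine Finset.sum_congr rfl fun i _ => ?_
  linear_combination v i * mul_adjugate_apply_eq_of_vecMul_eq_zero hw i j k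

theorem charmatrix_map_eval (A : Matrix n n R) (a : R) :
    (charmatrix A).map (eval a) = a • 1 - A := by
  ext i j
  rcases eq_or_ne i j with rfl | hij
  · simp [charmatrix_apply_eq]
  · simp [charmatrix_apply_ne _ _ _ hij, one_apply_ne hij]

theorem charmatrix_mulVec_comp_C {A : Matrix n n R} {a : R} {v : n → R}
    (hv : A *ᵥ v = a • v) : charmatrix A *ᵥ (C ∘ v) = (X - C a) • (C ∘ v) := by
  ext i
  have hCv := RingHom.map_mulVec C A v i
  rw [hv] at hCv
  rw [charmatrix, sub_mulVec, Pi.sub_apply, RingHom.mapMatrix_apply, ← hCv]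
  simp [sub_mul]

theorem adjugate_smul_one_sub_mulVec_of_mulVec_eq_smul {A : Matrix n n R} {a : R} {v : n → R}
    (hv : A *ᵥ v = a • v) :
    (a • 1 - A).adjugate *ᵥ v = (derivative A.charpoly).eval a • v := by
  have hfactor : A.charpoly • (C ∘ v) = (X - C a) • ((charmatrix A).adjugate *ᵥ (C ∘ v)) := by
    rw [← mulVec_smul, ← charmatrix_mulVec_comp_C hv, mulVec_mulVec, adjugate_mul, charpoly,
      smul_mulVec, one_mulVec]
  ext i
  have hderiv := congrArg (fun p => (derivative p).eval a) (congrFun hfactor i)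
  simp only [Pi.smul_apply, smul_eq_mul, Function.comp_apply, eval_derivative_X_sub_C_mul]
    at hderiv
  rw [mul_comm, derivative_C_mul, eval_mul, eval_C] at hderiv
  rw [Pi.smul_apply, smul_eq_mul, mul_comm, hderiv, ← coe_evalRingHom, RingHom.map_mulVec,
    ← RingHom.mapMatrix_apply, RingHom.map_adjugate, RingHom.mapMatrix_apply, coe_evalRingHom,
    charmatrix_map_eval]
  simp [Function.comp_def]

end Matrix

theorem thompson_mcEnteggert_general
    {R : Type*} [CommRing R] {n : ℕ} (A : Matrix (Fin n) (Fin n) R) (lam0 : R)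
    (v w : Fin n → R)
    (hAv : A.mulVec v = lam0 • v) (hwA : A.vecMul w = lam0 • w) :
    (w ⬝ᵥ v) • (lam0 • (1 : Matrix (Fin n) (Fin n) R) - A).adjugate =
      (Polynomial.derivative A.charpoly).eval lam0 • Matrix.vecMulVec v w := by
  have hwB : w ᵥ* (lam0 • 1 - A) = 0 := by
    rw [vecMul_sub, hwA, vecMul_smul, vecMul_one, sub_self]
  rw [dotProduct_smul_adjugate_of_vecMul_eq_zero hwB,
    adjugate_smul_one_sub_mulVec_of_mulVec_eq_smul hAv, smul_vecMulVec]

/-- Thompson–McEnteggert formula over a commutative ring: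
`(wᵀv) • Adj(λ₀ I − A) = p_A'(λ₀) • (v wᵀ)`. -/
theorem thompson_mcEnteggert
    {R : Type*} [CommRing R] {n : ℕ} (A : Matrix (Fin n) (Fin n) R) (lam0 : R)
    (v w : Fin n → R) (hv : v ≠ 0) (hw : w ≠ 0)
    (hAv : A.mulVec v = lam0 • v) (hwA : A.vecMul w = lam0 • w) :
    (w ⬝ᵥ v) • (lam0 • (1 : Matrix (Fin n) (Fin n) R) - A).adjugate =
      (Polynomial.derivative A.charpoly).eval lam0 • Matrix.vecMulVec v w :=
  thompson_mcEnteggert_general A lam0 v w hAv hwA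
end

section
/- Let F be a field and A an n×n matrix over F such that λ₀ is an eigenvalue of A with p_A'(λ₀) = 0 and rank(λ₀I − A) = n − 1. Then for every right eigenvector v and left eigenvector w of A for λ₀, wᵀv = 0. -/
/-!
If `w ⬝ᵥ v ≠ 0`, the hyperplane `w⊥` contains the range of `A - λ₀` but not the eigenline
`ker (A - λ₀) = F ∙ v`, so kernel and range of `A - λ₀` meet trivially. Then every generalized
eigenvector is an eigenvector, so the algebraic multiplicity of `λ₀` equals its geometric
multiplicity `1`, contradicting `p_A(λ₀) = p_A'(λ₀) = 0`.
-/

open Matrix Polynomial Module.End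

theorem Module.End.maxGenEigenspace_eq_eigenspace_of_disjoint {R M : Type*} [CommRing R]
    [AddCommGroup M] [Module R M] {f : End R M} {μ : R}
    (h : Disjoint (LinearMap.ker (f - μ • 1)) (LinearMap.range (f - μ • 1))) :
    f.maxGenEigenspace μ = f.eigenspace μ := by
  set g := f - μ • (1 : End R M)
  have ker_pow_le : ∀ (k : ℕ) (x : M), (g ^ k) x = 0 → g x = 0 := by
    intro k
    induction k with
    | zero =>
      intro x hx
      rw [pow_zero, one_apply] at hx
      rw [hx, map_zero]
    | succ k ih =>
      intro x hx
      rw [pow_succ, mul_apply] at hx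
      exact (Submodule.disjoint_def.1 h) (g x) (ih (g x) hx) (LinearMap.mem_range_self g x)
  refine le_antisymm (fun x hx => ?_) eigenspace_le_maxGenEigenspace
  obtain ⟨k, hk⟩ := (mem_maxGenEigenspace f μ x).1 hx
  rw [eigenspace_def]
  exact ker_pow_le k x hk

theorem Module.End.rootMultiplicity_charpoly_eq_finrank_eigenspace {K V : Type*} [Field K]
    [AddCommGroup V] [Module K V] [Module.Finite K V] {f : End K V} {μ : K}
    (h : Disjoint (LinearMap.ker (f - μ • 1)) (LinearMap.range (f - μ • 1))) :
    f.charpoly.rootMultiplicity μ = Module.finrank K (f.eigenspace μ) := by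
  rw [← LinearMap.finrank_maxGenEigenspace_eq, maxGenEigenspace_eq_eigenspace_of_disjoint h]

section

variable {K n : Type*} [Field K] [Fintype n] [DecidableEq n]

theorem Matrix.finrank_eigenspace_toLin' (A : Matrix n n K) (μ : K) :
    Module.finrank K (eigenspace (toLin' A) μ) = Fintype.card n - (μ • 1 - A).rank := by
  have hsub : toLin' A - μ • 1 = -toLin' (μ • 1 - A) := by
    rw [map_sub, map_smul, toLin'_one, neg_sub]
    rfl
  have rank_nullity := LinearMap.finrank_range_add_finrank_ker (toLin' (μ • 1 - A))
  rw [Module.finrank_fintype_fun_eq_card] at rank_nullity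
  rw [eigenspace_def, hsub, LinearMap.ker_neg, Matrix.rank, ← toLin'_apply']
  omega

theorem Matrix.dotProduct_eq_zero_of_mem_range {A : Matrix n n K} {μ : K} {w x : n → K}
    (hw : w ᵥ* A = μ • w) (hx : x ∈ LinearMap.range (toLin' A - μ • 1)) : w ⬝ᵥ x = 0 := by
  obtain ⟨y, rfl⟩ := hx
  rw [LinearMap.sub_apply, toLin'_apply, dotProduct_sub, dotProduct_mulVec, hw]
  simp

theorem Matrix.disjoint_ker_range_of_dotProduct_ne_zero {A : Matrix n n K} {μ : K} {v w : n → K}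
    (hv0 : v ≠ 0) (hv : A *ᵥ v = μ • v) (hw : w ᵥ* A = μ • w) (hwv : w ⬝ᵥ v ≠ 0)
    (hdim : Module.finrank K (eigenspace (toLin' A) μ) = 1) :
    Disjoint (LinearMap.ker (toLin' A - μ • 1)) (LinearMap.range (toLin' A - μ • 1)) := by
  have hv_mem : v ∈ eigenspace (toLin' A) μ := by rwa [mem_eigenspace_iff, toLin'_apply]
  rw [Submodule.disjoint_def, ← eigenspace_def]
  intro x hx hx_range
  obtain ⟨c, hc⟩ := (finrank_eq_one_iff_of_nonzero' (⟨v, hv_mem⟩ : eigenspace (toLin' A) μ)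
    (by simpa using hv0)).1 hdim ⟨x, hx⟩
  have hx_eq : c • v = x := congrArg Subtype.val hc
  have hc0 : c = 0 := by
    have := dotProduct_eq_zero_of_mem_range hw hx_range
    rw [← hx_eq, dotProduct_smul, smul_eq_mul] at this
    exact (mul_eq_zero.1 this).resolve_right hwv
  rw [← hx_eq, hc0, zero_smul]

end

/-- If `λ₀` is an eigenvalue of `A` with `p_A'(λ₀) = 0` and `rank(λ₀ I − A) = n − 1`,
then `wᵀ v = 0` for every right eigenvector `v` and left eigenvector `w` of `A` for `λ₀`. -/
theorem dot_eq_zero_of_derivative_eval_zero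
    {F : Type*} [Field F] {n : ℕ} (A : Matrix (Fin n) (Fin n) F) (lam0 : F)
    (hev : A.charpoly.eval lam0 = 0)
    (hder : (Polynomial.derivative A.charpoly).eval lam0 = 0)
    (hrank : (lam0 • (1 : Matrix (Fin n) (Fin n) F) - A).rank = n - 1) :
    ∀ v w : Fin n → F, v ≠ 0 → A.mulVec v = lam0 • v →
      w ≠ 0 → A.vecMul w = lam0 • w → w ⬝ᵥ v = 0 := by
  intro v w hv0 hv _ hw
  by_contra hwv
  have hn : n ≠ 0 := by rintro rfl; exact hv0 (Subsingleton.elim v 0)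
  have hdim : Module.finrank F (eigenspace (toLin' A) lam0) = 1 := by
    rw [finrank_eigenspace_toLin', hrank, Fintype.card_fin]; omega
  have hmult := rootMultiplicity_charpoly_eq_finrank_eigenspace
    (disjoint_ker_range_of_dotProduct_ne_zero hv0 hv hw hwv hdim)
  rw [charpoly_toLin', hdim] at hmult
  have hmult_gt := (one_lt_rootMultiplicity_iff_isRoot A.charpoly_monic.ne_zero).2 ⟨hev, hder⟩
  omega
end

section
/- Let F be a field and A an n×n matrix over F, and let λ₀ be an eigenvalue of A whose algebraic multiplicity is greater than 1 and whose geometric multiplicity is 1. Then wᵀv = 0 for any right eigenvector v and any left eigenvector w of A for λ₀. -/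
/-!
Write `B = A - λ₀`. If `ker B` and `range B` met only in `0`, then `ker B² = ker B`, the kernels of
the powers of `B` would stabilise at once, and the generalised eigenspace, whose dimension is the
algebraic multiplicity, would be the eigenspace itself. So a defective eigenvalue has an eigenvector
in `range B`, and when the eigenspace is a line it lies in `range B` entirely: `v = B u`. A left
eigenvector kills `range B`, since `wᵀ B u = (wᵀ B) u = 0`.
-/

open Matrix

namespace Module.End

variable {K V : Type*} [Field K] [AddCommGroup V] [Module K V]

theorem maxGenEigenspace_eq_eigenspace_of_disjoint_s6 {f : End K V} {μ : K}
    (h : Disjoint (f.eigenspace μ) (LinearMap.range (f - μ • 1))) :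
    f.maxGenEigenspace μ = f.eigenspace μ := by
  set g := f - μ • 1
  have hker : LinearMap.ker (g ^ 1) = LinearMap.ker (g ^ 2) := by
    refine le_antisymm (LinearMap.ker_le_ker_comp _ _) fun x hx => ?_
    have hgx : g x ∈ f.eigenspace μ := by
      rw [eigenspace_def, LinearMap.mem_ker]
      rwa [LinearMap.mem_ker, sq, mul_apply] at hx
    simpa using Submodule.disjoint_def.mp h _ hgx (LinearMap.mem_range_self g x)
  refine le_antisymm (fun x hx => ?_) eigenspace_le_maxGenEigenspace
  obtain ⟨k, hk⟩ := (f.mem_maxGenEigenspace μ x).mp hx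
  have hx1 : x ∈ LinearMap.ker (g ^ (1 + k)) := by
    rw [LinearMap.mem_ker, pow_add, pow_one, mul_apply, hk, map_zero]
  rw [← ker_pow_constant hker k, pow_one] at hx1
  rwa [eigenspace_def]

variable [FiniteDimensional K V]

theorem not_disjoint_eigenspace_range_of_finrank_lt {f : End K V} {μ : K}
    (h : Module.finrank K (f.eigenspace μ) < f.charpoly.rootMultiplicity μ) :
    ¬ Disjoint (f.eigenspace μ) (LinearMap.range (f - μ • 1)) := fun hd => by
  rw [← LinearMap.finrank_maxGenEigenspace_eq, maxGenEigenspace_eq_eigenspace_of_disjoint_s6 hd] at h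
  exact h.false

theorem eigenspace_le_range_of_finrank_eq_one {f : End K V} {μ : K}
    (hgeo : Module.finrank K (f.eigenspace μ) = 1) (halg : 1 < f.charpoly.rootMultiplicity μ) :
    f.eigenspace μ ≤ LinearMap.range (f - μ • 1) :=
  (Submodule.isAtom_iff_finrank_eq_one.mpr hgeo).not_disjoint_iff_le.mp
    (not_disjoint_eigenspace_range_of_finrank_lt (hgeo ▸ halg))

end Module.End

namespace Matrix

variable {R n : Type*} [CommRing R] [Fintype n]

theorem ker_mulVecLin_smul_one_sub [DecidableEq n] (A : Matrix n n R) (μ : R) :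
    LinearMap.ker (μ • (1 : Matrix n n R) - A).mulVecLin = Module.End.eigenspace A.mulVecLin μ := by
  ext x
  rw [LinearMap.mem_ker, Module.End.mem_eigenspace_iff, mulVecLin_apply, mulVecLin_apply,
    sub_mulVec, smul_mulVec, one_mulVec, sub_eq_zero, eq_comm]

theorem dotProduct_sub_smul_eq_zero_of_vecMul_eq_smul {A : Matrix n n R} {μ : R} {w : n → R}
    (hw : w ᵥ* A = μ • w) (u : n → R) : w ⬝ᵥ (A *ᵥ u - μ • u) = 0 := by
  rw [dotProduct_sub, dotProduct_mulVec, hw, dotProduct_smul, smul_dotProduct, sub_self]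

end Matrix

/-- If `λ₀` is an eigenvalue of `A` with algebraic multiplicity greater than `1` and
geometric multiplicity `1`, then `wᵀ v = 0` for any right eigenvector `v` and any left
eigenvector `w` of `A` for `λ₀`. -/
theorem dot_eq_zero_of_defective
    {F : Type*} [Field F] {n : ℕ} (A : Matrix (Fin n) (Fin n) F) (lam0 : F)
    (halg : 1 < A.charpoly.rootMultiplicity lam0)
    (hgeo : Module.finrank F
      (LinearMap.ker ((lam0 • (1 : Matrix (Fin n) (Fin n) F) - A).mulVecLin)) = 1) :
    ∀ v w : Fin n → F, v ≠ 0 → A.mulVec v = lam0 • v →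
      w ≠ 0 → A.vecMul w = lam0 • w → w ⬝ᵥ v = 0 := by
  intro v w _ hAv _ hAw
  rw [ker_mulVecLin_smul_one_sub] at hgeo
  obtain ⟨u, rfl⟩ := Module.End.eigenspace_le_range_of_finrank_eq_one hgeo
    (by rwa [charpoly_mulVecLin]) (Module.End.mem_eigenspace_iff.mpr hAv)
  exact dotProduct_sub_smul_eq_zero_of_vecMul_eq_smul hAw u
end

section
/- Let F be a field and A an invertible n×n matrix over F whose elementary divisors are p₁,...,p_r, where p_j(λ) = λ^{d_j} + a_{j1}λ^{d_j−1} + ... + a_{jd_j} with a_{jd_j} ≠ 0. Then the elementary divisors of Adj(A) are q₁,...,q_r, where q_j(λ) = λ^{d_j} + Δ·(a_{jd_j−1}/a_{jd_j})λ^{d_j−1} + ... + Δ^{d_j−1}·(a_{j1}/a_{jd_j})λ + Δ^{d_j}/a_{jd_j}, and Δ = det(A). -/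
/-!
Since `Adj A = Δ • A⁻¹`, it suffices to treat one companion block `C(p)` at a time. For the
antidiagonal matrix `T` with entries `1, Δ, …, Δ^(d-1)`, a direct computation gives
`C(p) * T * C(q) = Δ • T`, i.e. `T⁻¹ (Δ • C(p)⁻¹) T = C(q)`. On the polynomial side,
`q(X) = X^d p(Δ / X) / p(0)` is obtained from `p` by reversing the coefficients (`mirror`) and
rescaling the roots (`scaleRoots`). Both operations are multiplicative bijections of `F[X]`, so
they send a power of an irreducible polynomial to a power of an irreducible polynomial.
-/

open Matrix Polynomial

/-- The companion matrix of the monic polynomial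
`p(λ) = λ^d + a 1 * λ^(d-1) + ⋯ + a d` (with the convention `a 0 = 1`). -/
def companionMatrix {F : Type*} [Field F] (d : ℕ) (a : ℕ → F) :
    Matrix (Fin d) (Fin d) F :=
  Matrix.of fun i j =>
    if (i : ℕ) = (j : ℕ) + 1 then 1
    else if (j : ℕ) = d - 1 then -a (d - (i : ℕ)) else 0

namespace Polynomial

variable {R : Type*}

noncomputable def ofDescCoeffs [Semiring R] (d : ℕ) (a : ℕ → R) : R[X] :=
  ∑ i ∈ Finset.range (d + 1), C (a i) * X ^ (d - i)

theorem coeff_ofDescCoeffs [Semiring R] (d : ℕ) (a : ℕ → R) (n : ℕ) :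
    (ofDescCoeffs d a).coeff n = if n ≤ d then a (d - n) else 0 := by
  simp only [ofDescCoeffs, finsetSum_coeff, coeff_C_mul_X_pow]
  split_ifs with hn
  · rw [Finset.sum_eq_single_of_mem (d - n) (Finset.mem_range.2 (by omega)) (fun i hi hne => by
      simp at hi; exact if_neg (by omega))]
    rw [if_pos (Nat.sub_sub_self hn).symm]
  · exact Finset.sum_eq_zero fun i hi => if_neg (by simp at hi; omega)

theorem natDegree_ofDescCoeffs [Semiring R] (d : ℕ) {a : ℕ → R} (h0 : a 0 ≠ 0) :
    (ofDescCoeffs d a).natDegree = d :=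
  natDegree_eq_of_le_of_coeff_ne_zero
    (natDegree_le_iff_coeff_eq_zero.2 fun n hn => by
      rw [coeff_ofDescCoeffs, if_neg (by exact_mod_cast hn.not_ge)])
    (by rwa [coeff_ofDescCoeffs, if_pos le_rfl, Nat.sub_self])

theorem natTrailingDegree_ofDescCoeffs [Semiring R] (d : ℕ) {a : ℕ → R} (hd : a d ≠ 0) :
    (ofDescCoeffs d a).natTrailingDegree = 0 := by
  rw [natTrailingDegree_eq_zero, coeff_ofDescCoeffs, if_pos (Nat.zero_le d), Nat.sub_zero]
  exact Or.inr hd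

theorem scaleRoots_mirror_ofDescCoeffs [CommSemiring R] (d : ℕ) {a : ℕ → R} (h0 : a 0 ≠ 0)
    (hd : a d ≠ 0) (s : R) :
    (ofDescCoeffs d a).mirror.scaleRoots s = ofDescCoeffs d (fun i => s ^ i * a (d - i)) := by
  ext n
  rw [coeff_scaleRoots, coeff_mirror, mirror_natDegree, natDegree_ofDescCoeffs d h0,
    natTrailingDegree_ofDescCoeffs d hd, add_zero, coeff_ofDescCoeffs, coeff_ofDescCoeffs]
  by_cases hn : n ≤ d
  · rw [revAt_le hn, if_pos (Nat.sub_le d n), if_pos hn, Nat.sub_sub_self hn, mul_comm]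
  · rw [revAt_eq_self_of_lt (by omega), if_neg hn, if_neg hn, zero_mul]

noncomputable def mirrorMulEquiv [Semiring R] [NoZeroDivisors R] : R[X] ≃* R[X] where
  toFun := mirror
  invFun := mirror
  left_inv := mirror_mirror
  right_inv := mirror_mirror
  map_mul' p q := mirror_mul_of_domain p q

@[simps]
noncomputable def scaleRootsMulEquiv [CommSemiring R] [NoZeroDivisors R] (r : Rˣ) :
    R[X] ≃* R[X] where
  toFun p := p.scaleRoots r
  invFun p := p.scaleRoots ↑r⁻¹
  left_inv p := by simp only [← scaleRoots_mul, Units.mul_inv, scaleRoots_one]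
  right_inv p := by simp only [← scaleRoots_mul, Units.inv_mul, scaleRoots_one]
  map_mul' p q := mul_scaleRoots_of_noZeroDivisors p q r

theorem ofDescCoeffs_div [Field R] (d : ℕ) (a : ℕ → R) (c : R) :
    ofDescCoeffs d (fun i => a i / c) = C c⁻¹ * ofDescCoeffs d a := by
  simp only [ofDescCoeffs, Finset.mul_sum, ← mul_assoc, ← C_mul, div_eq_inv_mul]

theorem exists_irreducible_pow_of_ofDescCoeffs_eq_pow [Field R] {d : ℕ} {a : ℕ → R}
    (h0 : a 0 ≠ 0) (hd : a d ≠ 0) {s : R} (hs : s ≠ 0) {g : R[X]} {k : ℕ}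
    (hg : Irreducible g) (hP : ofDescCoeffs d a = g ^ k) :
    ∃ g' : R[X], Irreducible g' ∧ ofDescCoeffs d (fun i => s ^ i * a (d - i) / a d) = g' ^ k := by
  set ℓ := g.mirror.leadingCoeff
  have hmirror : (ofDescCoeffs d a).mirror = g.mirror ^ k := by
    rw [hP]; exact map_pow mirrorMulEquiv g k
  have hℓ : ℓ ^ k = a d := by
    rw [← leadingCoeff_pow, ← hmirror, mirror_leadingCoeff, trailingCoeff,
      natTrailingDegree_ofDescCoeffs d hd, coeff_ofDescCoeffs, if_pos (Nat.zero_le d),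
      Nat.sub_zero]
  have hℓ0 : ℓ ≠ 0 := by
    rw [ne_eq, leadingCoeff_eq_zero, mirror_eq_zero]; exact hg.ne_zero
  let h : R[X] := C ℓ⁻¹ * g.mirror
  have hh : Irreducible h := (irreducible_isUnit_mul (isUnit_C.2 (inv_ne_zero hℓ0).isUnit)).2
    ((MulEquiv.irreducible_iff mirrorMulEquiv).2 hg)
  refine ⟨scaleRootsMulEquiv (Units.mk0 s hs) h, (MulEquiv.irreducible_iff _).2 hh, ?_⟩
  have hdiv : (ofDescCoeffs d fun i => a i / a d).mirror = h ^ k := by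
    rw [ofDescCoeffs_div, mirror_mul_of_domain, mirror_C, hmirror, mul_pow, ← C_pow, inv_pow, hℓ]
  calc ofDescCoeffs d (fun i => s ^ i * a (d - i) / a d)
      = (ofDescCoeffs d fun i => a i / a d).mirror.scaleRoots s := by
        rw [scaleRoots_mirror_ofDescCoeffs d (div_ne_zero h0 hd) (div_ne_zero hd hd)]
        simp only [mul_div_assoc]
    _ = _ := by rw [hdiv, ← map_pow, scaleRootsMulEquiv_apply, Units.val_mk0]

end Polynomial

section AntidiagPow

variable {R : Type*} [CommRing R] {d : ℕ}

def antidiagPow (d : ℕ) (s : R) : Matrix (Fin d) (Fin d) R :=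
  (diagonal fun k : Fin d => s ^ (k : ℕ)).submatrix Fin.revPerm id

theorem antidiagPow_apply (s : R) (i k : Fin d) :
    antidiagPow d s i k = if (i : ℕ) + k = d - 1 then s ^ (k : ℕ) else 0 := by
  have : Fin.rev i = k ↔ (i : ℕ) + k = d - 1 := by
    rw [Fin.ext_iff, Fin.val_rev]; omega
  simp only [antidiagPow, submatrix_apply, Fin.revPerm_apply, id, diagonal_apply, this]
  split_ifs with h
  · rw [this.2 h]
  · rfl

theorem isUnit_det_antidiagPow {s : R} (hs : IsUnit s) : IsUnit (antidiagPow d s).det := by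
  rw [antidiagPow, det_permute, det_diagonal]
  exact ((Units.isUnit _).map (Int.castRingHom R)).mul
    (IsUnit.prod_univ_iff.2 fun k => hs.pow _)

end AntidiagPow

section CompanionMatrix

variable {F : Type*} [Field F] {d : ℕ}

theorem mul_companionMatrix_apply_of_lt {m : Type*} (b : ℕ → F) (M : Matrix m (Fin d) F)
    (i : m) (k : Fin d) (hk : (k : ℕ) + 1 < d) :
    (M * companionMatrix d b) i k = M i ⟨k + 1, hk⟩ := by
  rw [mul_apply, Finset.sum_eq_single_of_mem ⟨k + 1, hk⟩ (Finset.mem_univ _)]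
  · simp [companionMatrix]
  · intro l _ hl
    have hl' : (l : ℕ) ≠ k + 1 := fun h => hl (Fin.ext h)
    simp [companionMatrix, hl', show (k : ℕ) ≠ d - 1 by omega]

theorem mul_companionMatrix_apply_of_eq {m : Type*} (b : ℕ → F) (M : Matrix m (Fin d) F)
    (i : m) (k : Fin d) (hk : (k : ℕ) = d - 1) :
    (M * companionMatrix d b) i k = -∑ l, M i l * b (d - l) := by
  rw [mul_apply, ← Finset.sum_neg_distrib]
  refine Finset.sum_congr rfl fun l _ => ?_
  simp [companionMatrix, hk, show (l : ℕ) ≠ d - 1 + 1 by omega]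

theorem companionMatrix_mul_apply {n : Type*} (a : ℕ → F) (M : Matrix (Fin d) n F)
    (i : Fin d) (k : n) :
    (companionMatrix d a * M) i k =
      (if h : 0 < (i : ℕ) then M ⟨i - 1, by have := i.isLt; omega⟩ k else 0) -
        a (d - i) * M ⟨d - 1, by have := i.isLt; omega⟩ k := by
  have hi := i.isLt
  rw [mul_apply, ← Finset.add_sum_erase _ _ (Finset.mem_univ ⟨d - 1, by omega⟩), add_comm,
    sub_eq_add_neg, ← neg_mul]
  congr 1
  · split_ifs with hi0
    · rw [Finset.sum_eq_single_of_mem ⟨i - 1, by omega⟩ (by simp [Fin.ext_iff]; omega)]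
      · simp only [companionMatrix, of_apply, if_pos (Nat.sub_add_cancel hi0).symm, one_mul]
      · intro l hl hne
        have hne' : (i : ℕ) ≠ l + 1 := fun h => hne (Fin.ext (by simp; omega))
        have hl' : (l : ℕ) ≠ d - 1 := fun h => (Finset.mem_erase.1 hl).1 (Fin.ext h)
        simp [companionMatrix, hne', hl']
    · refine Finset.sum_eq_zero fun l hl => ?_
      have hl' : (l : ℕ) ≠ d - 1 := fun h => (Finset.mem_erase.1 hl).1 (Fin.ext h)
      simp [companionMatrix, show (i : ℕ) ≠ l + 1 by omega, hl']
  · simp [companionMatrix, show (i : ℕ) ≠ d - 1 + 1 by omega]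

theorem antidiagPow_mul_companionMatrix_apply_of_eq (s : F) (b : ℕ → F) (i k : Fin d)
    (hk : (k : ℕ) = d - 1) :
    (antidiagPow d s * companionMatrix d b) i k = -(s ^ (d - 1 - i) * b (i + 1)) := by
  have hi := i.isLt
  rw [mul_companionMatrix_apply_of_eq _ _ _ _ hk,
    Finset.sum_eq_single_of_mem ⟨d - 1 - i, by omega⟩ (Finset.mem_univ _)]
  · rw [antidiagPow_apply, if_pos (by simp; omega), show d - (d - 1 - i) = i + 1 by omega]
  · intro l _ hl
    rw [antidiagPow_apply, if_neg (fun h => hl (Fin.ext (by simp; omega))), zero_mul]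

theorem companionMatrix_mul_antidiagPow_mul_companionMatrix {a : ℕ → F} (h0 : a 0 = 1)
    (hd : a d ≠ 0) (s : F) :
    companionMatrix d a * (antidiagPow d s * companionMatrix d fun i => s ^ i * a (d - i) / a d) =
      s • antidiagPow d s := by
  ext i k
  have hi := i.isLt
  rw [companionMatrix_mul_apply, Matrix.smul_apply, antidiagPow_apply, smul_eq_mul]
  rcases Nat.lt_or_ge ((k : ℕ) + 1) d with hk | hk
  · simp only [mul_companionMatrix_apply_of_lt _ _ _ _ hk, antidiagPow_apply]
    split_ifs <;> first | omega | simp_all [pow_succ']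
  · have hk' : (k : ℕ) = d - 1 := by omega
    have hd1 : d - 1 + 1 = d := by omega
    simp only [antidiagPow_mul_companionMatrix_apply_of_eq _ _ _ _ hk', hk', Nat.sub_self, hd1,
      pow_zero, h0, one_mul, mul_one]
    split_ifs with hi0 hik hik
    · omega
    · have hpow : s ^ (d - 1 - ((i : ℕ) - 1)) * s ^ ((i : ℕ) - 1 + 1) = s ^ d := by
        rw [← pow_add]; congr 1; omega
      rw [show d - ((i : ℕ) - 1 + 1) = d - i by omega, mul_div_assoc, ← mul_assoc, hpow]
      ring
    · rw [show (i : ℕ) = 0 by omega, Nat.sub_zero, ← pow_succ', hd1]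
      field_simp
      ring
    · omega

end CompanionMatrix

theorem Matrix.adjugate_mul_eq_of_mul_mul_eq_det_smul {n R : Type*} [Fintype n] [DecidableEq n]
    [CommRing R] {A T N : Matrix n n R} (hA : IsUnit A.det) (h : A * (T * N) = A.det • T) :
    A.adjugate * T = T * N := by
  refine ((isUnit_iff_isUnit_det A).2 hA).mul_left_cancel ?_
  rw [← mul_assoc, mul_adjugate, smul_mul, Matrix.one_mul, h]

theorem Matrix.isUnit_det_blockDiagonal' {o R : Type*} [Fintype o] [DecidableEq o] [CommRing R]
    {m : o → Type*} [∀ j, Fintype (m j)] [∀ j, DecidableEq (m j)] {M : ∀ j, Matrix (m j) (m j) R}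
    (hM : ∀ j, IsUnit (M j).det) : IsUnit (blockDiagonal' M).det :=
  (isUnit_iff_isUnit_det _).1 <|
    (Pi.isUnit_iff.2 fun j => (isUnit_iff_isUnit_det _).2 (hM j)).map (blockDiagonal'RingHom m R)

/-- The elementary divisors are encoded through the primary rational canonical form: `A` is
similar, via `S`, to the block diagonal matrix of the companion matrices of its elementary divisors
`p_j`, each of which is a power of an irreducible polynomial; likewise for `Adj A` in the
conclusion. -/
theorem elementaryDivisors_adjugate_general
    {F : Type*} [Field F] (r : ℕ) (d : Fin r → ℕ)
    (a : Fin r → ℕ → F) (hlead : ∀ j, a j 0 = 1) (hconst : ∀ j, a j (d j) ≠ 0)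
    (hprime : ∀ j, ∃ (g : Polynomial F) (k : ℕ), Irreducible g ∧
      (∑ i ∈ Finset.range (d j + 1), Polynomial.C (a j i) * Polynomial.X ^ (d j - i)) = g ^ k)
    (A : Matrix ((j : Fin r) × Fin (d j)) ((j : Fin r) × Fin (d j)) F)
    (hA : IsUnit A.det)
    (S : Matrix ((j : Fin r) × Fin (d j)) ((j : Fin r) × Fin (d j)) F)
    (hS : IsUnit S.det)
    (hsim : A * S = S * Matrix.blockDiagonal' fun j => companionMatrix (d j) (a j)) :
    (∀ j, ∃ (g : Polynomial F) (k : ℕ), Irreducible g ∧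
      (∑ i ∈ Finset.range (d j + 1),
        Polynomial.C (A.det ^ i * a j (d j - i) / a j (d j)) * Polynomial.X ^ (d j - i)) =
        g ^ k) ∧
    ∃ T : Matrix ((j : Fin r) × Fin (d j)) ((j : Fin r) × Fin (d j)) F, IsUnit T.det ∧
      A.adjugate * T = T * Matrix.blockDiagonal' fun j =>
        companionMatrix (d j) (fun i => A.det ^ i * a j (d j - i) / a j (d j)) := by
  refine ⟨fun j => ?_, ?_⟩
  · obtain ⟨g, k, hg, hP⟩ := hprime j
    obtain ⟨g', hg', hQ⟩ := exists_irreducible_pow_of_ofDescCoeffs_eq_pow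
      (by simp [hlead]) (hconst j) hA.ne_zero hg hP
    exact ⟨g', k, hg', hQ⟩
  · refine ⟨S * blockDiagonal' fun j => antidiagPow (d j) A.det, ?_,
      adjugate_mul_eq_of_mul_mul_eq_det_smul hA ?_⟩
    · rw [det_mul]
      exact hS.mul (isUnit_det_blockDiagonal' fun j => isUnit_det_antidiagPow hA)
    · simp only [← Matrix.mul_assoc, hsim]
      simp only [Matrix.mul_assoc, ← blockDiagonal'_mul,
        companionMatrix_mul_antidiagPow_mul_companionMatrix (hlead _) (hconst _)]
      rw [← Pi.smul_def, blockDiagonal'_smul, Matrix.mul_smul]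

/-- Elementary divisors of the adjugate of a nonsingular matrix.
The elementary divisors of `A` are encoded by the primary rational canonical form:
`A` is similar to the block diagonal matrix of the companion matrices of its elementary
divisors `p_j(λ) = λ^(d j) + a j 1 * λ^(d j − 1) + ⋯ + a j (d j)`, each of which is a
power of an irreducible polynomial.  If `A` is nonsingular (each `a j (d j) ≠ 0`), then
the elementary divisors of `Adj(A)` are
`q_j(λ) = λ^(d j) + Δ (a j (d j −1)/a j (d j)) λ^(d j −1) + ⋯ + Δ^(d j)/a j (d j)`
with `Δ = det A`; i.e. each `q_j` is a power of an irreducible polynomial and `Adj(A)` is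
similar to the block diagonal matrix of the companion matrices of the `q_j`. -/
theorem elementaryDivisors_adjugate
    {F : Type*} [Field F] (r : ℕ) (d : Fin r → ℕ) (hd : ∀ j, 0 < d j)
    (a : Fin r → ℕ → F) (hlead : ∀ j, a j 0 = 1) (hconst : ∀ j, a j (d j) ≠ 0)
    (hprime : ∀ j, ∃ (g : Polynomial F) (k : ℕ), Irreducible g ∧
      (∑ i ∈ Finset.range (d j + 1), Polynomial.C (a j i) * Polynomial.X ^ (d j - i)) = g ^ k)
    (A : Matrix ((j : Fin r) × Fin (d j)) ((j : Fin r) × Fin (d j)) F)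
    (hA : IsUnit A.det)
    (S : Matrix ((j : Fin r) × Fin (d j)) ((j : Fin r) × Fin (d j)) F)
    (hS : IsUnit S.det)
    (hsim : A * S = S * Matrix.blockDiagonal' fun j => companionMatrix (d j) (a j)) :
    (∀ j, ∃ (g : Polynomial F) (k : ℕ), Irreducible g ∧
      (∑ i ∈ Finset.range (d j + 1),
        Polynomial.C (A.det ^ i * a j (d j - i) / a j (d j)) * Polynomial.X ^ (d j - i)) =
        g ^ k) ∧
    ∃ T : Matrix ((j : Fin r) × Fin (d j)) ((j : Fin r) × Fin (d j)) F, IsUnit T.det ∧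
      A.adjugate * T = T * Matrix.blockDiagonal' fun j =>
        companionMatrix (d j) (fun i => A.det ^ i * a j (d j - i) / a j (d j)) :=
  elementaryDivisors_adjugate_general r d a hlead hconst hprime A hA S hS hsim
end

section
/- Let F be a field and A an invertible n×n matrix over F. Let λ₀ be an eigenvalue of A (possibly in an extension field) with partial multiplicities m₁ ≥ ... ≥ m_s (sizes of Jordan blocks for λ₀). Then det(A)/λ₀ is an eigenvalue of Adj(A) with the same partial multiplicities m₁ ≥ ... ≥ m_s. -/
open Matrix Polynomial

/-- Let `A` be a nonsingular matrix over a field `F` and let `λ₀` (in the algebraic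
closure of `F`) be an eigenvalue of `A` with partial multiplicities `m₁ ≥ … ≥ m_s`.
Then `det A / λ₀` is an eigenvalue of `Adj(A)` with the same partial multiplicities.
Equality of partial multiplicities is expressed through the sequence
`k ↦ dim ker ((λ₀ I − B)^k)`, which determines the sizes of the Jordan blocks. -/
theorem adjugate_partial_multiplicities
    {F : Type*} [Field F] {n : ℕ} (A : Matrix (Fin n) (Fin n) F) (hA : IsUnit A.det)
    (lam0 : AlgebraicClosure F)
    (B : Matrix (Fin n) (Fin n) (AlgebraicClosure F))
    (hB : B = A.map (algebraMap F (AlgebraicClosure F)))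
    (hev : (lam0 • (1 : Matrix (Fin n) (Fin n) (AlgebraicClosure F)) - B).det = 0) :
    ((B.det / lam0) • (1 : Matrix (Fin n) (Fin n) (AlgebraicClosure F)) -
        B.adjugate).det = 0 ∧
    ∀ k : ℕ,
      Module.finrank (AlgebraicClosure F)
        (LinearMap.ker
          (((lam0 • (1 : Matrix (Fin n) (Fin n) (AlgebraicClosure F)) - B) ^ k).mulVecLin)) =
      Module.finrank (AlgebraicClosure F)
        (LinearMap.ker
          ((((B.det / lam0) • (1 : Matrix (Fin n) (Fin n) (AlgebraicClosure F)) -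
              B.adjugate) ^ k).mulVecLin)) := by
  classical
  have hd : B.det ≠ 0 := by
    have h1 : B.det = algebraMap F (AlgebraicClosure F) A.det := by
      rw [hB]; exact (RingHom.map_det (algebraMap F (AlgebraicClosure F)) A).symm
    rw [h1]
    exact (_root_.map_ne_zero _).mpr (isUnit_iff_ne_zero.mp hA)
  have hBu : IsUnit B.det := isUnit_iff_ne_zero.mpr hd
  have hl : lam0 ≠ 0 := by
    rintro rfl
    rw [zero_smul, zero_sub, Matrix.det_neg] at hev
    exact hd (by simpa using (mul_eq_zero.mp hev).resolve_left (by simp))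
  set D := lam0 • (1 : Matrix (Fin n) (Fin n) (AlgebraicClosure F)) - B with hD
  set c := -(B.det / lam0) with hc
  set M := c • B⁻¹ with hM
  have hadj : B.adjugate = B.det • B⁻¹ := by
    calc B.adjugate = B.adjugate * (B * B⁻¹) := by
          rw [Matrix.mul_nonsing_inv B hBu, mul_one]
      _ = (B.adjugate * B) * B⁻¹ := by rw [mul_assoc]
      _ = B.det • B⁻¹ := by rw [Matrix.adjugate_mul, Matrix.smul_mul, one_mul]
  have key : (B.det / lam0) • (1 : Matrix (Fin n) (Fin n) (AlgebraicClosure F)) -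
      B.adjugate = M * D := by
    rw [hM, hD, hadj, Matrix.smul_mul, mul_sub, Matrix.mul_smul, mul_one,
      Matrix.nonsing_inv_mul B hBu, smul_sub, smul_smul, hc]
    have : -(B.det / lam0) * lam0 = -B.det := by field_simp
    rw [this, neg_smul, neg_smul]
    abel
  have hc0 : c ≠ 0 := by
    rw [hc]; exact neg_ne_zero.mpr (div_ne_zero hd hl)
  have hMu : IsUnit M := by
    rw [Matrix.isUnit_iff_isUnit_det, hM, Matrix.det_smul, Matrix.det_nonsing_inv, Ring.inverse_eq_inv']
    exact (IsUnit.pow _ (isUnit_iff_ne_zero.mpr hc0)).mul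
      (isUnit_iff_ne_zero.mpr (inv_ne_zero hd))
  have h1 : Commute B⁻¹ B := by
    rw [Commute, SemiconjBy, Matrix.nonsing_inv_mul B hBu, Matrix.mul_nonsing_inv B hBu]
  have hcomm : Commute M D := by
    rw [hM, hD]
    exact (((Commute.one_right B⁻¹).smul_right lam0).sub_right h1).smul_left c
  refine ⟨by rw [key, Matrix.det_mul, hev, mul_zero], fun k => ?_⟩
  rw [key, hcomm.mul_pow, Matrix.mulVecLin_mul,
    LinearMap.ker_comp_of_ker_eq_bot _ ?_]
  rw [LinearMap.ker_eq_bot]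
  intro x y hxy
  have hMk : IsUnit (M ^ k) := hMu.pow k
  have hd' := (Matrix.isUnit_iff_isUnit_det _).mp hMk
  have h2 := congrArg (((M ^ k)⁻¹).mulVec) hxy
  simpa [Matrix.mulVecLin_apply, Matrix.mulVec_mulVec,
    Matrix.nonsing_inv_mul _ hd', Matrix.one_mulVec] using h2
end

section
/- (Eigenvector-eigenvalue identity) Let A be an n×n Hermitian matrix with eigenvalues λ₁ ≥ ... ≥ λ_n, and for each i let v_i be a unit eigenvector for λ_i with entries v_{ij}. For each j, let μ_{j1} ≥ ... ≥ μ_{j,n−1} be the eigenvalues of the (n−1)×(n−1) principal submatrix M_j obtained by deleting the j-th row and column of A. Then |v_{ij}|² · Π_{k≠i}(λ_i − λ_k) = Π_{k=1}^{n−1}(λ_i − μ_{jk}) for all i, j. -/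
open Matrix Polynomial

lemma myMap_erase {α β : Type*} [DecidableEq α] [DecidableEq β] (f : α → β) {a : α}
    {s : Multiset α} (h : a ∈ s) : (s.erase a).map f = (s.map f).erase (f a) := by
  rw [show s = a ::ₘ s.erase a from (Multiset.cons_erase h).symm]
  simp

lemma myEvalCharpoly {m : Type*} [Fintype m] [DecidableEq m]
    (M : Matrix m m ℂ) (x : ℂ) :
    M.charpoly.eval x = (Matrix.diagonal (fun _ => x) - M).det := by
  rw [Matrix.charpoly, ← Polynomial.coe_evalRingHom, RingHom.map_det]
  congr 1
  ext i j
  by_cases h : i = j <;>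
    simp [h, Matrix.charmatrix_apply, Matrix.diagonal, RingHom.mapMatrix_apply]

lemma myCharmatrixDiagonal {m : Type*} [Fintype m] [DecidableEq m] (d : m → ℂ) :
    charmatrix (Matrix.diagonal d) = Matrix.diagonal (fun k => X - C (d k)) := by
  ext i j
  by_cases h : i = j <;> simp [h, Matrix.charmatrix_apply, Matrix.diagonal]

lemma myCharpolyConj {m : Type*} [Fintype m] [DecidableEq m]
    (A U : Matrix m m ℂ) (d : m → ℂ) (hU1 : U * star U = 1)
    (hAeq : A = U * Matrix.diagonal d * star U) :
    A.charpoly = ∏ k, (X - C (d k)) := by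
  set f : Matrix m m ℂ →+* Matrix m m ℂ[X] := (Polynomial.C : ℂ →+* ℂ[X]).mapMatrix with hf
  have hcomm : ∀ M : Matrix m m ℂ[X], Matrix.scalar m (X : ℂ[X]) * M
      = M * Matrix.scalar m (X : ℂ[X]) := by
    intro M
    exact (Matrix.scalar_commute (X : ℂ[X]) (fun r' => mul_comm _ _) M)
  have hfU : f U * f (star U) = 1 := by
    rw [← _root_.map_mul f, hU1, _root_.map_one f]
  have hfU2 : f (star U) * f U = 1 := by
    rw [← _root_.map_mul f, mul_eq_one_comm.mp hU1, _root_.map_one f]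
  have hch : charmatrix A = f U * charmatrix (Matrix.diagonal d) * f (star U) := by
    rw [charmatrix, charmatrix, hAeq]
    rw [mul_sub, sub_mul]
    congr 1
    · rw [← hcomm (f U), mul_assoc, hfU, mul_one]
    · rw [_root_.map_mul f, _root_.map_mul f]
  rw [Matrix.charpoly, hch, det_mul, det_mul]
  rw [mul_comm, ← mul_assoc, ← det_mul, hfU2, det_one, one_mul]
  rw [myCharmatrixDiagonal, det_diagonal]

lemma myAdjConj {m : Type*} [Fintype m] [DecidableEq m]
    (A U : Matrix m m ℂ) (d : m → ℂ) (hU1 : U * star U = 1)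
    (hAeq : A = U * Matrix.diagonal d * star U) (x : ℂ) (j : m) :
    adjugate (Matrix.diagonal (fun _ => x) - A) j j
      = ∑ k : m, (U j k * (starRingEnd ℂ) (U j k)) *
          ∏ l ∈ Finset.univ.erase k, (x - d l) := by
  have hU2 : star U * U = 1 := mul_eq_one_comm.mp hU1
  have hsm : (x • (1 : Matrix m m ℂ)) = Matrix.diagonal (fun _ => x) := by
    rw [Matrix.smul_eq_diagonal_mul, mul_one]
  have key : Matrix.diagonal (fun _ => x) - A
      = U * (Matrix.diagonal (fun k => x - d k)) * star U := by
    have h1 : Matrix.diagonal (fun k : m => x - d k)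
        = x • (1 : Matrix m m ℂ) - Matrix.diagonal d := by
      rw [hsm, Matrix.diagonal_sub]
    rw [h1, hAeq, mul_sub, sub_mul]
    congr 1
    rw [mul_smul_comm, mul_one, Matrix.smul_mul, hU1, hsm]
  have hadjU : adjugate U = Matrix.det U • star U := by
    calc adjugate U = (star U * U) * adjugate U := by rw [hU2, one_mul]
      _ = star U * (Matrix.det U • 1) := by rw [mul_assoc, Matrix.mul_adjugate]
      _ = Matrix.det U • star U := by rw [mul_smul_comm, mul_one]
  have hadjUs : adjugate (star U) = Matrix.det (star U) • U := by
    calc adjugate (star U) = (U * star U) * adjugate (star U) := by rw [hU1, one_mul]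
      _ = U * (Matrix.det (star U) • 1) := by rw [mul_assoc, Matrix.mul_adjugate]
      _ = Matrix.det (star U) • U := by rw [mul_smul_comm, mul_one]
  have hdet : Matrix.det (star U) * Matrix.det U = 1 := by
    rw [← Matrix.det_mul, hU2, Matrix.det_one]
  have hadj : adjugate (Matrix.diagonal (fun _ => x) - A)
      = U * Matrix.diagonal (fun k => ∏ l ∈ Finset.univ.erase k, (x - d l)) * star U := by
    rw [key, Matrix.adjugate_mul_distrib, Matrix.adjugate_mul_distrib, hadjU, hadjUs,
      Matrix.adjugate_diagonal]
    simp only [Matrix.smul_mul, Matrix.mul_smul]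
    rw [smul_smul, mul_comm, hdet, one_smul, mul_assoc]
  rw [hadj]
  rw [Matrix.mul_apply]
  congr 1
  ext k
  rw [Matrix.mul_diagonal, Matrix.star_apply]
  simp only [RCLike.star_def]
  ring

/-- Eigenvector-eigenvalue identity for Hermitian matrices: if `A` is Hermitian with
eigenvalues `λ 0 ≥ … ≥ λ n` and unit eigenvectors `v i`, and for each `j` the principal
submatrix `M j` (deleting row and column `j`) has eigenvalues `μ j 0 ≥ … ≥ μ j (n−1)`,
then `|v i j|² ∏_{k ≠ i} (λ i − λ k) = ∏_k (λ i − μ j k)`. -/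
theorem eigenvector_eigenvalue_identity
    {n : ℕ} (A : Matrix (Fin (n + 1)) (Fin (n + 1)) ℂ) (hA : A.IsHermitian)
    (lam : Fin (n + 1) → ℝ) (hlam : ∀ i j : Fin (n + 1), i ≤ j → lam j ≤ lam i)
    (hchar : A.charpoly = ∏ k : Fin (n + 1), (Polynomial.X - Polynomial.C (lam k : ℂ)))
    (v : Fin (n + 1) → Fin (n + 1) → ℂ)
    (hv : ∀ i, A.mulVec (v i) = (lam i : ℂ) • v i)
    (hunit : ∀ i, star (v i) ⬝ᵥ v i = 1)
    (mu : Fin (n + 1) → Fin n → ℝ)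
    (hmu : ∀ j, ∀ k l : Fin n, k ≤ l → mu j l ≤ mu j k)
    (hcharmu : ∀ j : Fin (n + 1),
      (A.submatrix j.succAbove j.succAbove).charpoly =
        ∏ k : Fin n, (Polynomial.X - Polynomial.C (mu j k : ℂ))) :
    ∀ i j : Fin (n + 1),
      ((Complex.normSq (v i j) : ℂ)) *
          ∏ k ∈ Finset.univ.erase i, ((lam i : ℂ) - (lam k : ℂ)) =
        ∏ k : Fin n, ((lam i : ℂ) - (mu j k : ℂ)) := by
  intro i j
  set U : Matrix (Fin (n+1)) (Fin (n+1)) ℂ :=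
    ((hA.eigenvectorUnitary : unitaryGroup (Fin (n+1)) ℂ) : Matrix (Fin (n+1)) (Fin (n+1)) ℂ)
    with hUdef
  set d : Fin (n+1) → ℂ := RCLike.ofReal ∘ hA.eigenvalues with hd
  set x : ℂ := ((lam i : ℝ) : ℂ) with hx
  set lamC : Fin (n+1) → ℂ := fun k => ((lam k : ℝ) : ℂ) with hlamC
  have hU1 : U * star U = 1 := Matrix.mem_unitaryGroup_iff.mp (hA.eigenvectorUnitary).2
  have hU2 : star U * U = 1 := mul_eq_one_comm.mp hU1
  have hAeq : A = U * Matrix.diagonal d * star U := hA.spectral_theorem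
  -- multiset equality of eigenvalues
  have hms : Multiset.map lamC Finset.univ.val = Multiset.map d Finset.univ.val := by
    have hpq : ∏ k : Fin (n+1), (X - C (lamC k)) = ∏ k : Fin (n+1), (X - C (d k)) := by
      have := myCharpolyConj A U d hU1 hAeq
      rw [hchar] at this
      simpa [hlamC] using this
    have hprod : ((Multiset.map lamC Finset.univ.val).map (fun a => X - C a)).prod
        = ((Multiset.map d Finset.univ.val).map (fun a => X - C a)).prod := by
      rw [Multiset.map_map, Multiset.map_map]
      rw [← Finset.prod_eq_multiset_prod, ← Finset.prod_eq_multiset_prod]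
      exact hpq
    have h1 := Polynomial.roots_multiset_prod_X_sub_C (Multiset.map lamC Finset.univ.val)
    have h2 := Polynomial.roots_multiset_prod_X_sub_C (Multiset.map d Finset.univ.val)
    rw [← h1, ← h2, hprod]
  -- counting helper
  have hcard : ∀ (f : Fin (n+1) → ℂ) (b : ℂ),
      Multiset.count b (Multiset.map f Finset.univ.val)
        = (Finset.univ.filter (fun a => b = f a)).card := by
    intro f b
    rw [Multiset.count_map, Finset.card_def, Finset.filter_val]
  have hcount : ∀ b : ℂ, (Finset.univ.filter (fun a => b = lamC a)).card
      = (Finset.univ.filter (fun a => b = d a)).card := by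
    intro b
    rw [← hcard, ← hcard, hms]
  -- the right-hand side as a sum
  have hRHS : (∏ k : Fin n, (x - ((mu j k : ℝ) : ℂ)))
      = ∑ m : Fin (n+1), (U j m * (starRingEnd ℂ) (U j m)) *
          ∏ l ∈ Finset.univ.erase m, (x - d l) := by
    have h1 : ∏ k : Fin n, (x - ((mu j k : ℝ):ℂ))
        = ((A.submatrix j.succAbove j.succAbove).charpoly).eval x := by
      rw [hcharmu j, Polynomial.eval_prod]
      simp
    rw [h1, myEvalCharpoly]
    have h2 : (Matrix.diagonal (fun _ => x) - A.submatrix j.succAbove j.succAbove)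
        = (Matrix.diagonal (fun _ => x) - A).submatrix j.succAbove j.succAbove := by
      ext a b
      by_cases hab : a = b
      · simp [hab]
      · have : j.succAbove a ≠ j.succAbove b := fun h => hab (Fin.succAbove_right_injective h)
        simp [Matrix.diagonal_apply_ne _ hab, Matrix.diagonal_apply_ne _ this, hab]
    rw [h2]
    have h3 : ((Matrix.diagonal (fun _ => x) - A).submatrix j.succAbove j.succAbove).det
        = adjugate (Matrix.diagonal (fun _ => x) - A) j j := by
      rw [Matrix.adjugate_fin_succ_eq_det_submatrix]
      rw [show ((-1 : ℂ) ^ ((j : ℕ) + (j : ℕ)) = 1) from Even.neg_one_pow ⟨j, rfl⟩, one_mul]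
    rw [h3, myAdjConj A U d hU1 hAeq x j]
  rw [hRHS]
  by_cases hdeg : ∃ k, k ≠ i ∧ lam k = lam i
  · -- degenerate case: both sides vanish
    obtain ⟨k₀, hk₀ne, hk₀⟩ := hdeg
    have hlhs : ∏ k ∈ Finset.univ.erase i, (x - lamC k) = 0 := by
      refine Finset.prod_eq_zero (Finset.mem_erase.mpr ⟨hk₀ne, Finset.mem_univ _⟩) ?_
      rw [hlamC, hx]
      simp [hk₀]
    have h2le : 1 < (Finset.univ.filter (fun a => x = lamC a)).card := by
      refine Finset.one_lt_card.mpr ⟨i, ?_, k₀, ?_, (Ne.symm hk₀ne)⟩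
      · simp [hlamC, hx]
      · simp [hlamC, hx, hk₀]
    rw [hcount] at h2le
    obtain ⟨a, ha, b, hb, hab⟩ := Finset.one_lt_card.mp h2le
    have hda : d a = x := ((Finset.mem_filter.mp ha).2).symm
    have hdb : d b = x := ((Finset.mem_filter.mp hb).2).symm
    have hsum : ∀ m : Fin (n+1), ∏ l ∈ Finset.univ.erase m, (x - d l) = 0 := by
      intro m
      rcases eq_or_ne a m with rfl | ham
      · refine Finset.prod_eq_zero (Finset.mem_erase.mpr ⟨(Ne.symm hab), Finset.mem_univ _⟩) ?_
        rw [hdb, sub_self]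
      · refine Finset.prod_eq_zero (Finset.mem_erase.mpr ⟨ham, Finset.mem_univ _⟩) ?_
        rw [hda, sub_self]
    rw [hlhs, mul_zero]
    symm
    refine Finset.sum_eq_zero fun m _ => ?_
    rw [hsum m, mul_zero]
  · -- simple eigenvalue case
    push_neg at hdeg
    have hfl : Finset.univ.filter (fun a => x = lamC a) = {i} := by
      ext k
      simp only [Finset.mem_filter, Finset.mem_univ, true_and, Finset.mem_singleton]
      constructor
      · intro h
        by_contra hk
        exact hdeg k hk (Complex.ofReal_inj.mp h.symm)
      · rintro rfl; rfl
    have h1card : (Finset.univ.filter (fun a => x = d a)).card = 1 := by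
      rw [← hcount, hfl, Finset.card_singleton]
    obtain ⟨m₀, hm₀⟩ := Finset.card_eq_one.mp h1card
    have hdm₀ : d m₀ = x := by
      have : m₀ ∈ Finset.univ.filter (fun a => x = d a) := by
        rw [hm₀]; exact Finset.mem_singleton_self m₀
      exact ((Finset.mem_filter.mp this).2).symm
    have hdne : ∀ m : Fin (n+1), m ≠ m₀ → d m ≠ x := by
      intro m hm hcon
      apply hm
      have : m ∈ Finset.univ.filter (fun a => x = d a) := by
        simp [hcon]
      rw [hm₀, Finset.mem_singleton] at this
      exact this
    set w : Fin (n+1) → ℂ := (star U).mulVec (v i) with hw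
    have hDv : (Matrix.diagonal d).mulVec w = x • w := by
      have hcommA : Matrix.diagonal d * star U = star U * A := by
        rw [hAeq, ← mul_assoc, ← mul_assoc, hU2, one_mul]
      rw [hw, Matrix.mulVec_mulVec, hcommA, ← Matrix.mulVec_mulVec, hv i, Matrix.mulVec_smul]
    have hwz : ∀ m : Fin (n+1), m ≠ m₀ → w m = 0 := by
      intro m hm
      have := congrFun hDv m
      rw [Matrix.mulVec_diagonal] at this
      have h0 : (d m - x) * w m = 0 := by
        rw [sub_mul, this]
        simp [mul_comm]
      rcases mul_eq_zero.mp h0 with h | h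
      · exact absurd (sub_eq_zero.mp h) (hdne m hm)
      · exact h
    have hvw : U.mulVec w = v i := by
      rw [hw, Matrix.mulVec_mulVec, hU1, Matrix.one_mulVec]
    have hvj : v i j = U j m₀ * w m₀ := by
      rw [← hvw, Matrix.mulVec, dotProduct]
      exact Finset.sum_eq_single m₀ (fun m _ hm => by rw [hwz m hm, mul_zero])
        (fun h => absurd (Finset.mem_univ m₀) h)
    have hwnorm : w m₀ * (starRingEnd ℂ) (w m₀) = 1 := by
      have hsw : star w ⬝ᵥ w = 1 := by
        rw [hw, Matrix.star_mulVec, ← Matrix.dotProduct_mulVec, Matrix.mulVec_mulVec,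
          ← Matrix.star_eq_conjTranspose, star_star, hU1, Matrix.one_mulVec, hunit i]
      have : star w ⬝ᵥ w = (starRingEnd ℂ) (w m₀) * w m₀ := by
        rw [dotProduct]
        refine Finset.sum_eq_single m₀ (fun m _ hm => by rw [Pi.star_apply, hwz m hm]; simp)
          (fun h => absurd (Finset.mem_univ m₀) h)
      rw [this] at hsw
      rw [mul_comm]; exact hsw
    -- reduce the sum to the single term m₀
    have hsum : ∑ m : Fin (n+1), (U j m * (starRingEnd ℂ) (U j m)) *
          ∏ l ∈ Finset.univ.erase m, (x - d l)
        = (U j m₀ * (starRingEnd ℂ) (U j m₀)) * ∏ l ∈ Finset.univ.erase m₀, (x - d l) := by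
      refine Finset.sum_eq_single m₀ (fun m _ hm => ?_)
        (fun h => absurd (Finset.mem_univ m₀) h)
      have : ∏ l ∈ Finset.univ.erase m, (x - d l) = 0 := by
        refine Finset.prod_eq_zero (Finset.mem_erase.mpr ⟨Ne.symm hm, Finset.mem_univ _⟩) ?_
        rw [hdm₀, sub_self]
      rw [this, mul_zero]
    rw [hsum]
    -- product over erased sets agree
    have hprod : ∏ l ∈ Finset.univ.erase m₀, (x - d l)
        = ∏ k ∈ Finset.univ.erase i, (x - lamC k) := by
      rw [Finset.prod_eq_multiset_prod, Finset.prod_eq_multiset_prod,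
        Finset.erase_val, Finset.erase_val]
      have e1 : Multiset.map (fun l => x - d l) (Finset.univ.val.erase m₀)
          = Multiset.map (fun y => x - y) (Multiset.map d (Finset.univ.val.erase m₀)) := by
        rw [Multiset.map_map]; rfl
      have e2 : Multiset.map (fun l => x - lamC l) (Finset.univ.val.erase i)
          = Multiset.map (fun y => x - y) (Multiset.map lamC (Finset.univ.val.erase i)) := by
        rw [Multiset.map_map]; rfl
      rw [e1, e2, myMap_erase d (Finset.mem_val.mpr (Finset.mem_univ m₀)),
        myMap_erase lamC (Finset.mem_val.mpr (Finset.mem_univ i)),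
        hdm₀, show lamC i = x from rfl, hms]
    rw [hprod]
    -- normSq equality
    have hnsq : ((Complex.normSq (v i j) : ℝ) : ℂ) = U j m₀ * (starRingEnd ℂ) (U j m₀) := by
      rw [← Complex.mul_conj, hvj]
      rw [_root_.map_mul (starRingEnd ℂ)]
      calc U j m₀ * w m₀ * ((starRingEnd ℂ) (U j m₀) * (starRingEnd ℂ) (w m₀))
          = (U j m₀ * (starRingEnd ℂ) (U j m₀)) * (w m₀ * (starRingEnd ℂ) (w m₀)) := by ring
        _ = U j m₀ * (starRingEnd ℂ) (U j m₀) := by rw [hwnorm, mul_one]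
    rw [hnsq]
end

section
/- Let F be a field, A an n×n matrix over F, and λ₀ an eigenvalue of A with geometric multiplicity 1 and algebraic multiplicity m. Let u₀, v₀ ∈ F^n be right and left eigenvectors of A for λ₀. Then for any x, y ∈ F^n, λ₀ is an eigenvalue of A + x yᵀ if and only if yᵀu₀ = 0 or v₀ᵀx = 0. -/
open Matrix Polynomial

lemma vecMulVec_mulVec_aux {F : Type*} [CommRing F] {n : ℕ} (x y w : Fin n → F) :
    (Matrix.vecMulVec x y).mulVec w = (y ⬝ᵥ w) • x := by
  ext i
  simp only [Matrix.mulVec, Matrix.vecMulVec_apply, dotProduct, Pi.smul_apply,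
    smul_eq_mul, Finset.mul_sum]
  rw [Finset.sum_mul]
  exact Finset.sum_congr rfl fun j _ => by ring

lemma vecMul_vecMulVec_aux {F : Type*} [CommRing F] {n : ℕ} (x y v : Fin n → F) :
    Matrix.vecMul v (Matrix.vecMulVec x y) = (v ⬝ᵥ x) • y := by
  ext j
  simp [Matrix.vecMul, Matrix.vecMulVec_apply, dotProduct, Finset.sum_mul, mul_assoc]

/-- Let `λ₀` be an eigenvalue of `A` with geometric multiplicity `1` and algebraic
multiplicity `m`, and let `u₀`, `v₀` be right and left eigenvectors of `A` for `λ₀`.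
Then for any vectors `x`, `y`, `λ₀` is an eigenvalue of `A + x yᵀ` if and only if
`yᵀ u₀ = 0` or `v₀ᵀ x = 0`. -/
theorem eigenvalue_rankOne_update_iff
    {F : Type*} [Field F] {n : ℕ} (A : Matrix (Fin n) (Fin n) F) (lam0 : F) (m : ℕ)
    (hgeo : Module.finrank F
      (LinearMap.ker ((lam0 • (1 : Matrix (Fin n) (Fin n) F) - A).mulVecLin)) = 1)
    (halg : A.charpoly.rootMultiplicity lam0 = m)
    (u₀ v₀ : Fin n → F) (hu : u₀ ≠ 0) (hv : v₀ ≠ 0)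
    (hAu : A.mulVec u₀ = lam0 • u₀) (hvA : A.vecMul v₀ = lam0 • v₀) :
    ∀ x y : Fin n → F,
      (lam0 • (1 : Matrix (Fin n) (Fin n) F) - (A + Matrix.vecMulVec x y)).det = 0 ↔
        y ⬝ᵥ u₀ = 0 ∨ v₀ ⬝ᵥ x = 0 := by
  intro x y
  set M : Matrix (Fin n) (Fin n) F := lam0 • (1 : Matrix (Fin n) (Fin n) F) - A with hM
  have hMu : M.mulVec u₀ = 0 := by
    simp [hM, Matrix.sub_mulVec, Matrix.smul_mulVec, hAu]
  have hvM : Matrix.vecMul v₀ M = 0 := by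
    simp only [hM, Matrix.vecMul_sub, hvA]
    ext j
    simp [Matrix.vecMul, dotProduct, Matrix.one_apply, mul_comm]
  -- kernel of M is spanned by u₀
  have hu_mem : u₀ ∈ LinearMap.ker M.mulVecLin := by
    simpa [Matrix.mulVecLin_apply] using hMu
  have hker : ∀ w ∈ LinearMap.ker M.mulVecLin, ∃ c : F, w = c • u₀ := by
    have h1 : (Submodule.span F {u₀} : Submodule F (Fin n → F)) ≤ LinearMap.ker M.mulVecLin :=
      Submodule.span_le.mpr (by simpa using hu_mem)
    have h2 : Module.finrank F (Submodule.span F {u₀} : Submodule F (Fin n → F)) = 1 :=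
      finrank_span_singleton hu
    have heq : (Submodule.span F {u₀} : Submodule F (Fin n → F)) = LinearMap.ker M.mulVecLin :=
      Submodule.eq_of_le_of_finrank_eq h1 (by rw [h2, hgeo])
    intro w hw
    have : w ∈ Submodule.span F ({u₀} : Set (Fin n → F)) := heq ▸ hw
    rcases Submodule.mem_span_singleton.mp this with ⟨c, hc⟩
    exact ⟨c, hc.symm⟩
  have hrw : lam0 • (1 : Matrix (Fin n) (Fin n) F) - (A + Matrix.vecMulVec x y)
      = M - Matrix.vecMulVec x y := by
    rw [hM]; abel
  rw [hrw]
  constructor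
  · intro hdet
    by_contra hcon
    push_neg at hcon
    obtain ⟨hyu, hvx⟩ := hcon
    obtain ⟨w, hw0, hw⟩ := (Matrix.exists_mulVec_eq_zero_iff).mpr hdet
    have hMw : M.mulVec w = (y ⬝ᵥ w) • x := by
      have := hw
      rw [Matrix.sub_mulVec, vecMulVec_mulVec_aux, sub_eq_zero] at this
      exact this
    have hyw : y ⬝ᵥ w = 0 := by
      have h0 : v₀ ⬝ᵥ M.mulVec w = 0 := by
        rw [Matrix.dotProduct_mulVec, hvM]
        simp
      rw [hMw, dotProduct_smul] at h0
      have hvx' : v₀ ⬝ᵥ x ≠ 0 := hvx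
      rcases mul_eq_zero.mp h0 with h | h
      · exact h
      · exact absurd h hvx'
    have hMw0 : M.mulVec w = 0 := by rw [hMw, hyw, zero_smul]
    obtain ⟨c, hc⟩ := hker w (by simpa [Matrix.mulVecLin_apply] using hMw0)
    have : c * (y ⬝ᵥ u₀) = 0 := by
      have := hyw
      rw [hc, dotProduct_smul, smul_eq_mul] at this
      exact this
    rcases mul_eq_zero.mp this with h | h
    · exact hw0 (by rw [hc, h, zero_smul])
    · exact hyu h
  · rintro (hyu | hvx)
    · rw [← Matrix.exists_mulVec_eq_zero_iff]
      refine ⟨u₀, hu, ?_⟩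
      rw [Matrix.sub_mulVec, vecMulVec_mulVec_aux, hMu, hyu, zero_smul, sub_zero]
    · rw [← Matrix.exists_vecMul_eq_zero_iff]
      refine ⟨v₀, hv, ?_⟩
      rw [Matrix.vecMul_sub, vecMul_vecMulVec_aux, hvM, hvx, zero_smul, sub_zero]
end

section
/- Let F be a field, A, B n×n matrices over F with rank(B − A) ≤ 1. If λ₀ is an eigenvalue of A with geometric multiplicity at least 2, then λ₀ is an eigenvalue of B. -/
open Matrix

private lemma matrix_rank_add_le {F : Type*} [Field F] {n : ℕ}
    (M N : Matrix (Fin n) (Fin n) F) : (M + N).rank ≤ M.rank + N.rank := by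
  have hle : LinearMap.range (M + N).mulVecLin ≤
      LinearMap.range M.mulVecLin ⊔ LinearMap.range N.mulVecLin := by
    rintro _ ⟨v, rfl⟩
    rw [Matrix.mulVecLin_apply, Matrix.add_mulVec]
    exact Submodule.add_mem_sup ⟨v, rfl⟩ ⟨v, rfl⟩
  calc (M + N).rank ≤ Module.finrank F
        (LinearMap.range M.mulVecLin ⊔ LinearMap.range N.mulVecLin : Submodule F (Fin n → F)) :=
        Submodule.finrank_mono hle
    _ ≤ M.rank + N.rank := Submodule.finrank_add_le_finrank_add_finrank _ _

/-- If `rank(B − A) ≤ 1` and `λ₀` is an eigenvalue of `A` with geometric multiplicity at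
least `2`, then `λ₀` is an eigenvalue of `B`. -/
theorem eigenvalue_of_rankOne_update_of_geometric_multiplicity_two
    {F : Type*} [Field F] {n : ℕ} (A B : Matrix (Fin n) (Fin n) F)
    (hrank : (B - A).rank ≤ 1) (lam0 : F)
    (hgeo : 2 ≤ Module.finrank F
      (LinearMap.ker ((lam0 • (1 : Matrix (Fin n) (Fin n) F) - A).mulVecLin))) :
    (lam0 • (1 : Matrix (Fin n) (Fin n) F) - B).det = 0 := by
  set M := lam0 • (1 : Matrix (Fin n) (Fin n) F) - A with hM
  set N := lam0 • (1 : Matrix (Fin n) (Fin n) F) - B with hN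
  have hranknull : ∀ C : Matrix (Fin n) (Fin n) F,
      C.rank + Module.finrank F (LinearMap.ker C.mulVecLin) = n := by
    intro C
    have := LinearMap.finrank_range_add_finrank_ker C.mulVecLin
    simpa [Matrix.rank] using this
  have hMrank : M.rank + 2 ≤ n := by
    have := hranknull M
    omega
  have hNeq : N = M + -(B - A) := by
    rw [hM, hN]; abel
  have hNrank : N.rank < n := by
    have h1 : N.rank ≤ M.rank + (-(B - A)).rank := by
      rw [hNeq]; exact matrix_rank_add_le _ _
    have h2 : (-(B - A)).rank = (B - A).rank := by
      have hmv : (-(B - A)).mulVecLin = -(B - A).mulVecLin := by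
        ext v; simp [Matrix.neg_mulVec]
      simp only [Matrix.rank]
      rw [hmv, LinearMap.range_neg]
    omega
  have hker : 0 < Module.finrank F (LinearMap.ker N.mulVecLin) := by
    have := hranknull N
    omega
  haveI := Module.finrank_pos_iff.mp hker
  obtain ⟨⟨v, hv⟩, hvne⟩ := exists_ne (0 : LinearMap.ker N.mulVecLin)
  rw [← Matrix.exists_mulVec_eq_zero_iff]
  refine ⟨v, ?_, hv⟩
  intro h
  exact hvne (Subtype.ext h)
end
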